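/- arXiv:2205.00444 — 8 statements merged into one kernel-verified Lean document; each statement's English description precedes it below -/
import Mathlib

section
/- Every anticommutative weakly associative algebra over a field of characteristic zero is a Lie algebra (i.e. the Jacobi identity holds). -/
/-!
Anticommutativity rewrites every term of the weak associativity identity at `(x, y, z)` as
`±` a term of the Jacobi sum `J`; the identity then reads `J + J = 0`, and `2` is invertible.
-/

namespace LinearMap.IsAlt

variable {R M : Type*} [CommSemiring R] [AddCommGroup M] [Module R M]
  {mul : M →ₗ[R] M →ₗ[R] M}

theorem two_nsmul_jacobi_eq_zero (H : mul.IsAlt) {x y z : M}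
    (hwa : mul (mul x y) z - mul x (mul y z) + mul (mul y z) x - mul y (mul z x)
      = mul (mul y x) z - mul y (mul x z)) :
    2 • (mul (mul x y) z + mul (mul y z) x + mul (mul z x) y) = 0 := by
  rw [← H.neg (mul y z), ← H.neg (mul z x), ← H.neg x y, ← H.neg z x, map_neg, map_neg,
    neg_apply, ← H.neg (mul z x)] at hwa
  rw [two_nsmul]
  linear_combination (norm := abel) hwa

end LinearMap.IsAlt

/-- Every anticommutative weakly associative algebra over a field of characteristic
zero is a Lie algebra (the Jacobi identity holds). -/
theorem stmt_1 {k A : Type*} [Field k] [CharZero k] [AddCommGroup A] [Module k A]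
    (mul : A →ₗ[k] A →ₗ[k] A)
    (hanti : ∀ x : A, mul x x = 0)
    (hwa : ∀ x y z : A,
        mul (mul x y) z - mul x (mul y z) + mul (mul y z) x - mul y (mul z x)
          = mul (mul y x) z - mul y (mul x z)) :
    ∀ x y z : A, mul (mul x y) z + mul (mul y z) x + mul (mul z x) y = 0 := by
  intro x y z
  have hJ := LinearMap.IsAlt.two_nsmul_jacobi_eq_zero hanti (hwa x y z)
  rw [← Nat.cast_smul_eq_nsmul k, smul_eq_zero] at hJ
  exact hJ.resolve_left two_ne_zero
end

section
/- Every symmetric Leibniz algebra is flexible, i.e. satisfies (xy)x = x(yx) for all x,y. -/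
theorem mul_self_mul_eq_zero_of_leibniz {A : Type*} [NonUnitalNonAssocRing A]
    (hL : ∀ x y z : A, x * (y * z) = (x * y) * z + y * (x * z)) (x y : A) :
    (x * x) * y = 0 :=
  add_eq_right.mp (hL x x y).symm

/-- Every symmetric Leibniz algebra is flexible: `(xy)x = x(yx)`. -/
theorem stmt_5 {A : Type*} [NonUnitalNonAssocRing A]
    (hL : ∀ x y z : A, x * (y * z) = (x * y) * z + y * (x * z))
    (hR : ∀ x y z : A, (x * y) * z = (x * z) * y + x * (y * z)) :
    ∀ x y : A, (x * y) * x = x * (y * x) := by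
  intro x y
  rw [hR x y x, mul_self_mul_eq_zero_of_leibniz hL, zero_add]
end

section
/- In any symmetric Leibniz algebra over a field of characteristic different from 2, the cube of every element is zero: for all x, (xx)x = 0 and x(xx) = 0. -/
theorem mul_self_mul_eq_zero_of_left_leibniz {A : Type*} [Mul A] [AddRightCancelMonoid A]
    (hL : ∀ x y z : A, x * (y * z) = (x * y) * z + y * (x * z)) (x : A) :
    (x * x) * x = 0 :=
  right_eq_add.mp (hL x x x)

theorem mul_mul_self_eq_zero_of_right_leibniz {A : Type*} [Mul A] [AddLeftCancelMonoid A]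
    (hR : ∀ x y z : A, (x * y) * z = (x * z) * y + x * (y * z)) (x : A) :
    x * (x * x) = 0 :=
  left_eq_add.mp (hR x x x)

theorem stmt_6_general {A : Type*} [NonUnitalNonAssocRing A]
    (hL : ∀ x y z : A, x * (y * z) = (x * y) * z + y * (x * z))
    (hR : ∀ x y z : A, (x * y) * z = (x * z) * y + x * (y * z)) :
    ∀ x : A, (x * x) * x = 0 ∧ x * (x * x) = 0 := fun x =>
  ⟨mul_self_mul_eq_zero_of_left_leibniz hL x, mul_mul_self_eq_zero_of_right_leibniz hR x⟩

/-- In any symmetric Leibniz algebra over a field of characteristic `≠ 2`,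
the cube of every element is zero. -/
theorem stmt_6 {k A : Type*} [Field k] [NonUnitalNonAssocRing A] [Module k A]
    [IsScalarTower k A A] [SMulCommClass k A A]
    (h2 : (2 : k) ≠ 0)
    (hL : ∀ x y z : A, x * (y * z) = (x * y) * z + y * (x * z))
    (hR : ∀ x y z : A, (x * y) * z = (x * z) * y + x * (y * z)) :
    ∀ x : A, (x * x) * x = 0 ∧ x * (x * x) = 0 :=
  stmt_6_general hL hR
end

section
/- In a symmetric Leibniz algebra A over a field of characteristic different from 2, for all x, y ∈ A one has (xx)y = 0 and y(xx) = 0. -/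
/-- In a symmetric Leibniz algebra over a field of characteristic `≠ 2`,
every square `x·x` annihilates the algebra: `(xx)y = 0` and `y(xx) = 0`. -/
theorem stmt_7 {k A : Type*} [Field k] [NonUnitalNonAssocRing A] [Module k A]
    [IsScalarTower k A A] [SMulCommClass k A A]
    (h2 : (2 : k) ≠ 0)
    (hL : ∀ x y z : A, x * (y * z) = (x * y) * z + y * (x * z))
    (hR : ∀ x y z : A, (x * y) * z = (x * z) * y + x * (y * z)) :
    ∀ x y : A, (x * x) * y = 0 ∧ y * (x * x) = 0 := by
  intro x y
  constructor
  · have h := hL x x y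
    have := right_eq_add.mp h
    exact this
  · have h := hR y x x
    exact (left_eq_add.mp h)
end

section
/- If A is a symmetric Leibniz algebra over a field of characteristic zero, then the same vector space equipped with the commutator bracket [x,y] = xy - yx and the anticommutator product x∘y = (xy + yx)/2 forms a Poisson algebra: [·,·] is a Lie bracket, ∘ is commutative and associative, and the Leibniz rule [x, y∘z] = [x,y]∘z + y∘[x,z] holds. -/
/-!
In a symmetric Leibniz algebra every product `ab` anticommutes with every element, and `(ab)c`
is antisymmetric in `a, b` with vanishing cyclic sum. Consequently the anticommutator of a
product (or of a commutator) with anything vanishes, so `∘` is two-step nilpotent and both sides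
of associativity and of the Leibniz rule are zero, while `[[x,y],z] = 4 (xy)z`, so the Jacobi
identity is the cyclic identity.
-/

namespace SymmetricLeibniz

variable {A : Type*} [NonUnitalNonAssocRing A]
  (hL : ∀ x y z : A, x * (y * z) = x * y * z + y * (x * z))
  (hR : ∀ x y z : A, x * y * z = x * z * y + x * (y * z))

include hL hR

theorem mul_mul_eq_neg_mul_mul (a b c : A) : c * (a * b) = -(a * b * c) := by
  have h := hR a c b
  rw [hL a c b] at h
  linear_combination (norm := abel1) -h

theorem mul_mul_eq_mul_mul_sub (a b c : A) : a * b * c = a * c * b - b * c * a := by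
  rw [hR a b c, mul_mul_eq_neg_mul_mul hL hR b c a]
  abel

theorem mul_swap_mul_eq_neg (a b c : A) : b * a * c = -(a * b * c) := by
  linear_combination (norm := abel1)
    mul_mul_eq_mul_mul_sub hL hR a b c + mul_mul_eq_mul_mul_sub hL hR b a c

theorem mul_mul_cyclic_sum (a b c : A) : a * b * c + b * c * a + c * a * b = 0 := by
  linear_combination (norm := abel1)
    mul_mul_eq_mul_mul_sub hL hR a b c + mul_swap_mul_eq_neg hL hR a c b

theorem commutator_jacobi (x y z : A) :
    ((x * y - y * x) * z - z * (x * y - y * x))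
      + ((y * z - z * y) * x - x * (y * z - z * y))
      + ((z * x - x * z) * y - y * (z * x - x * z)) = 0 := by
  simp only [sub_mul, mul_sub, mul_mul_eq_neg_mul_mul hL hR]
  linear_combination (norm := abel1) 4 • mul_mul_cyclic_sum hL hR x y z
    - 2 • mul_swap_mul_eq_neg hL hR x y z - 2 • mul_swap_mul_eq_neg hL hR y z x
    - 2 • mul_swap_mul_eq_neg hL hR z x y

theorem anticommutator_mul_eq_zero (a b c : A) : (a * b + b * a) * c = 0 := by
  rw [add_mul, mul_swap_mul_eq_neg hL hR a b c, add_neg_cancel]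

theorem mul_anticommutator_eq_zero (a b c : A) : c * (a * b + b * a) = 0 := by
  rw [mul_add, mul_mul_eq_neg_mul_mul hL hR, mul_mul_eq_neg_mul_mul hL hR, ← neg_add, ← add_mul,
    anticommutator_mul_eq_zero hL hR, neg_zero]

theorem commutator_mul_add_mul_commutator (a b c : A) :
    (a * b - b * a) * c + c * (a * b - b * a) = 0 := by
  rw [sub_mul, mul_sub, mul_mul_eq_neg_mul_mul hL hR, mul_mul_eq_neg_mul_mul hL hR]
  abel

end SymmetricLeibniz

open SymmetricLeibniz in
theorem stmt_8_general {k A : Type*} [Field k] [NonUnitalNonAssocRing A]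
    [Module k A] [IsScalarTower k A A] [SMulCommClass k A A]
    (hL : ∀ x y z : A, x * (y * z) = (x * y) * z + y * (x * z))
    (hR : ∀ x y z : A, (x * y) * z = (x * z) * y + x * (y * z)) :
    -- the commutator is alternating
    (∀ x : A, x * x - x * x = 0) ∧
    -- Jacobi identity for the commutator bracket
    (∀ x y z : A,
      ((x * y - y * x) * z - z * (x * y - y * x))
        + ((y * z - z * y) * x - x * (y * z - z * y))
        + ((z * x - x * z) * y - y * (z * x - x * z)) = 0) ∧
    -- the anticommutator is commutative
    (∀ x y : A, (2⁻¹ : k) • (x * y + y * x) = (2⁻¹ : k) • (y * x + x * y)) ∧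
    -- the anticommutator is associative
    (∀ x y z : A,
      (2⁻¹ : k) • (((2⁻¹ : k) • (x * y + y * x)) * z + z * ((2⁻¹ : k) • (x * y + y * x)))
        = (2⁻¹ : k) • (x * ((2⁻¹ : k) • (y * z + z * y)) + ((2⁻¹ : k) • (y * z + z * y)) * x)) ∧
    -- the Leibniz rule `[x, y∘z] = [x,y]∘z + y∘[x,z]`
    (∀ x y z : A,
      x * ((2⁻¹ : k) • (y * z + z * y)) - ((2⁻¹ : k) • (y * z + z * y)) * x
        = (2⁻¹ : k) • ((x * y - y * x) * z + z * (x * y - y * x))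
          + (2⁻¹ : k) • (y * (x * z - z * x) + (x * z - z * x) * y)) := by
  refine ⟨fun x => sub_self _, commutator_jacobi hL hR, fun x y => by rw [add_comm (x * y)],
    fun x y z => ?_, fun x y z => ?_⟩
  · simp only [smul_mul_assoc, mul_smul_comm, anticommutator_mul_eq_zero hL hR,
      mul_anticommutator_eq_zero hL hR, smul_zero, add_zero]
  · rw [add_comm (y * (x * z - z * x)), commutator_mul_add_mul_commutator hL hR,
      commutator_mul_add_mul_commutator hL hR]
    simp only [smul_mul_assoc, mul_smul_comm, anticommutator_mul_eq_zero hL hR,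
      mul_anticommutator_eq_zero hL hR, smul_zero, sub_zero, add_zero]

/-- A symmetric Leibniz algebra over a field of characteristic zero gives a Poisson
algebra under the commutator `[x,y] = xy - yx` and the anticommutator
`x∘y = (xy + yx)/2`. -/
theorem stmt_8 {k A : Type*} [Field k] [CharZero k] [NonUnitalNonAssocRing A]
    [Module k A] [IsScalarTower k A A] [SMulCommClass k A A]
    (hL : ∀ x y z : A, x * (y * z) = (x * y) * z + y * (x * z))
    (hR : ∀ x y z : A, (x * y) * z = (x * z) * y + x * (y * z)) :
    -- the commutator is alternating
    (∀ x : A, x * x - x * x = 0) ∧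
    -- Jacobi identity for the commutator bracket
    (∀ x y z : A,
      ((x * y - y * x) * z - z * (x * y - y * x))
        + ((y * z - z * y) * x - x * (y * z - z * y))
        + ((z * x - x * z) * y - y * (z * x - x * z)) = 0) ∧
    -- the anticommutator is commutative
    (∀ x y : A, (2⁻¹ : k) • (x * y + y * x) = (2⁻¹ : k) • (y * x + x * y)) ∧
    -- the anticommutator is associative
    (∀ x y z : A,
      (2⁻¹ : k) • (((2⁻¹ : k) • (x * y + y * x)) * z + z * ((2⁻¹ : k) • (x * y + y * x)))
        = (2⁻¹ : k) • (x * ((2⁻¹ : k) • (y * z + z * y)) + ((2⁻¹ : k) • (y * z + z * y)) * x)) ∧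
    -- the Leibniz rule `[x, y∘z] = [x,y]∘z + y∘[x,z]`
    (∀ x y z : A,
      x * ((2⁻¹ : k) • (y * z + z * y)) - ((2⁻¹ : k) • (y * z + z * y)) * x
        = (2⁻¹ : k) • ((x * y - y * x) * z + z * (x * y - y * x))
          + (2⁻¹ : k) • (y * (x * z - z * x) + (x * z - z * x) * y)) :=
  stmt_8_general hL hR
end

section
/- Let A be a weakly associative algebra over ℂ, V a vector space, and θ : A × A → V a bilinear map satisfying the weak-associativity 2-cocycle condition θ(xy,z) - θ(x,yz) + θ(yz,x) - θ(y,zx) = θ(yx,z) - θ(y,xz) for all x,y,z. Then the product on A ⊕ V defined by (x+u)(y+v) = xy + θ(x,y) is weakly associative. Conversely, if this product on A ⊕ V is weakly associative, then θ satisfies the cocycle condition. -/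
/-- The product on `A ⊕ V` defined by a bilinear map `θ`. -/
def extMul {A V : Type*} [Mul A] (θ : A → A → V) (p q : A × V) : A × V :=
  (p.1 * q.1, θ p.1 q.1)

def WeaklyAssociative {M : Type*} [Add M] [Sub M] (mul : M → M → M) : Prop :=
  ∀ x y z : M, mul (mul x y) z - mul x (mul y z) + mul (mul y z) x - mul y (mul z x)
    = mul (mul y x) z - mul y (mul x z)

def IsWeakAssocCocycle {A V : Type*} [Mul A] [Add V] [Sub V] (θ : A → A → V) : Prop :=
  ∀ x y z : A, θ (x * y) z - θ x (y * z) + θ (y * z) x - θ y (z * x)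
    = θ (y * x) z - θ y (x * z)

section extMul

variable {A V : Type*} [Mul A]

@[simp]
theorem extMul_fst (θ : A → A → V) (p q : A × V) : (extMul θ p q).1 = p.1 * q.1 := rfl

@[simp]
theorem extMul_snd (θ : A → A → V) (p q : A × V) : (extMul θ p q).2 = θ p.1 q.1 := rfl

theorem weaklyAssociative_extMul_iff [AddGroup A] [AddGroup V] (θ : A → A → V) :
    WeaklyAssociative (extMul θ) ↔
      WeaklyAssociative (· * · : A → A → A) ∧ IsWeakAssocCocycle θ := by
  constructor
  · intro h
    refine ⟨fun x y z => ?_, fun x y z => ?_⟩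
    · simpa using congrArg Prod.fst (h (x, 0) (y, 0) (z, 0))
    · simpa using congrArg Prod.snd (h (x, 0) (y, 0) (z, 0))
  · rintro ⟨hA, hθ⟩ p q r
    ext
    · simpa using hA p.1 q.1 r.1
    · simpa using hθ p.1 q.1 r.1

end extMul

theorem stmt_9_general {A V : Type*} [NonUnitalNonAssocRing A] [Module ℂ A]
    [AddCommGroup V] [Module ℂ V]
    (θ : A →ₗ[ℂ] A →ₗ[ℂ] V)
    (hwa : ∀ x y z : A,
      (x * y) * z - x * (y * z) + (y * z) * x - y * (z * x)
        = (y * x) * z - y * (x * z)) :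
    (∀ x y z : A,
        θ (x * y) z - θ x (y * z) + θ (y * z) x - θ y (z * x)
          = θ (y * x) z - θ y (x * z)) ↔
      (∀ p q r : A × V,
        extMul (fun a b => θ a b) (extMul (fun a b => θ a b) p q) r
            - extMul (fun a b => θ a b) p (extMul (fun a b => θ a b) q r)
            + extMul (fun a b => θ a b) (extMul (fun a b => θ a b) q r) p
            - extMul (fun a b => θ a b) q (extMul (fun a b => θ a b) r p)
          = extMul (fun a b => θ a b) (extMul (fun a b => θ a b) q p) r
            - extMul (fun a b => θ a b) q (extMul (fun a b => θ a b) p r)) :=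
  ((weaklyAssociative_extMul_iff fun a b => θ a b).trans (and_iff_right hwa)).symm

/-- For a weakly associative complex algebra `A` and bilinear `θ : A × A → V`,
the central-extension product on `A ⊕ V` is weakly associative iff `θ` satisfies the
weak-associativity 2-cocycle condition. -/
theorem stmt_9 {A V : Type*} [NonUnitalNonAssocRing A] [Module ℂ A]
    [IsScalarTower ℂ A A] [SMulCommClass ℂ A A]
    [AddCommGroup V] [Module ℂ V]
    (θ : A →ₗ[ℂ] A →ₗ[ℂ] V)
    (hwa : ∀ x y z : A,
      (x * y) * z - x * (y * z) + (y * z) * x - y * (z * x)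
        = (y * x) * z - y * (x * z)) :
    (∀ x y z : A,
        θ (x * y) z - θ x (y * z) + θ (y * z) x - θ y (z * x)
          = θ (y * x) z - θ y (x * z)) ↔
      (∀ p q r : A × V,
        extMul (fun a b => θ a b) (extMul (fun a b => θ a b) p q) r
            - extMul (fun a b => θ a b) p (extMul (fun a b => θ a b) q r)
            + extMul (fun a b => θ a b) (extMul (fun a b => θ a b) q r) p
            - extMul (fun a b => θ a b) q (extMul (fun a b => θ a b) r p)
          = extMul (fun a b => θ a b) (extMul (fun a b => θ a b) q p) r
            - extMul (fun a b => θ a b) q (extMul (fun a b => θ a b) p r)) :=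
  stmt_9_general θ hwa
end

section
/- For distinct α, α' ∈ ℂ, the 4-dimensional algebras W03^α and W03^{α'} with products e1e1 = e2, e1e3 = (α+1)e4, e2e2 = e4, e3e1 = α e4 (respectively with α') are not isomorphic as ℂ-algebras. -/
/-- The multiplication of the 4-dimensional complex algebra `W03^α`:
`e1e1 = e2`, `e1e3 = (α+1) e4`, `e2e2 = e4`, `e3e1 = α e4`. -/
def w03mul (α : ℂ) (x y : Fin 4 → ℂ) : Fin 4 → ℂ :=
  ![0, x 0 * y 0, 0,
    (α + 1) * (x 0 * y 2) + x 1 * y 1 + α * (x 2 * y 0)]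

/-!
Let `φ` be an isomorphism from `W03^α` to `W03^{α'}`, `a` the `e1`-coordinate of `φ e1` and `c`
the `e3`-coordinate of `φ e3`. Since `e3² = 0`, `φ e3` lies in the span of `e3, e4`, and since
`e4 = (e1²)²`, `φ e4 = a⁴ e4`, so `a ≠ 0`. Comparing `e4`-coordinates in `φ (e1 e3) = φ e1 φ e3`
and `φ (e3 e1) = φ e3 φ e1` gives `(α+1) a⁴ = (α'+1) a c` and `α a⁴ = α' a c`. Subtracting,
`a⁴ = a c`, hence `(α - α') a⁴ = 0` and `α = α'`.
-/

section

variable (α : ℂ)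

@[simp] lemma w03mul_apply_zero (x y : Fin 4 → ℂ) : w03mul α x y 0 = 0 := rfl

@[simp] lemma w03mul_apply_one (x y : Fin 4 → ℂ) : w03mul α x y 1 = x 0 * y 0 := rfl

@[simp] lemma w03mul_apply_two (x y : Fin 4 → ℂ) : w03mul α x y 2 = 0 := rfl

@[simp] lemma w03mul_apply_three (x y : Fin 4 → ℂ) :
    w03mul α x y 3 = (α + 1) * (x 0 * y 2) + x 1 * y 1 + α * (x 2 * y 0) := rfl

lemma apply_eq_zero_of_w03mul_self_eq_zero {z : Fin 4 → ℂ} (h : w03mul α z z = 0) :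
    z 0 = 0 ∧ z 1 = 0 := by
  have h0 : z 0 = 0 := mul_self_eq_zero.mp (by simpa using congrFun h 1)
  exact ⟨h0, mul_self_eq_zero.mp (by simpa [h0] using congrFun h 3)⟩

lemma w03mul_self_w03mul_self (x : Fin 4 → ℂ) :
    w03mul α (w03mul α x x) (w03mul α x x) = Pi.single 3 (x 0 ^ 4) := by
  funext i; fin_cases i <;> simp; ring

lemma w03mul_single_two_single_two : w03mul α (Pi.single 2 1) (Pi.single 2 1) = 0 := by
  funext i; fin_cases i <;> simp

lemma w03mul_single_zero_single_two :
    w03mul α (Pi.single 0 1) (Pi.single 2 1) = Pi.single 3 (α + 1) := by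
  funext i; fin_cases i <;> simp

lemma w03mul_single_two_single_zero :
    w03mul α (Pi.single 2 1) (Pi.single 0 1) = Pi.single 3 α := by
  funext i; fin_cases i <;> simp

end

section

variable {α α' : ℂ} {φ : (Fin 4 → ℂ) →ₗ[ℂ] (Fin 4 → ℂ)}
  (hφ : ∀ x y, φ (w03mul α x y) = w03mul α' (φ x) (φ y))
include hφ

lemma map_single_two_apply_eq_zero : φ (Pi.single 2 1) 0 = 0 ∧ φ (Pi.single 2 1) 1 = 0 :=
  apply_eq_zero_of_w03mul_self_eq_zero α' <| by
    rw [← hφ, w03mul_single_two_single_two, map_zero]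

lemma map_single_three (r : ℂ) :
    φ (Pi.single 3 r) = Pi.single 3 (r * φ (Pi.single 0 1) 0 ^ 4) := by
  have he4 := w03mul_self_w03mul_self α (Pi.single 0 1)
  simp only [Pi.single_eq_same, one_pow] at he4
  conv_lhs => rw [← mul_one r, ← smul_eq_mul, Pi.single_smul', map_smul, ← he4, hφ, hφ]
  rw [w03mul_self_w03mul_self, ← Pi.single_smul', smul_eq_mul]

end

/-- For distinct `α, α'` the algebras `W03^α` and `W03^{α'}` are not isomorphic. -/
theorem stmt_15 {α α' : ℂ} (h : α ≠ α') :
    ¬ ∃ φ : (Fin 4 → ℂ) ≃ₗ[ℂ] (Fin 4 → ℂ),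
        ∀ x y : Fin 4 → ℂ, φ (w03mul α x y) = w03mul α' (φ x) (φ y) := by
  rintro ⟨φ, hφ⟩
  set a := φ (Pi.single 0 1) 0
  set c := φ (Pi.single 2 1) 2
  obtain ⟨hc0, hc1⟩ : φ (Pi.single 2 1) 0 = 0 ∧ φ (Pi.single 2 1) 1 = 0 :=
    map_single_two_apply_eq_zero (φ := φ.toLinearMap) hφ
  have hφe4 (r : ℂ) : φ (Pi.single 3 r) = Pi.single 3 (r * a ^ 4) :=
    map_single_three (φ := φ.toLinearMap) hφ r
  have ha : a ≠ 0 := fun ha ↦ by simpa [ha] using hφe4 1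
  have h13 : (α + 1) * a ^ 4 = (α' + 1) * (a * c) := by
    simpa [w03mul_single_zero_single_two, hφe4, hc0, hc1] using
      congrFun (hφ (Pi.single 0 1) (Pi.single 2 1)) 3
  have h31 : α * a ^ 4 = α' * (c * a) := by
    simpa [w03mul_single_two_single_zero, hφe4, hc0, hc1] using
      congrFun (hφ (Pi.single 2 1) (Pi.single 0 1)) 3
  have key : (α - α') * a ^ 4 = 0 := by linear_combination (1 + α') * h31 - α' * h13
  exact h (sub_eq_zero.mp ((mul_eq_zero.mp key).resolve_right (pow_ne_zero 4 ha)))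
end

section
/- The algebra S01 (with products e1e1 = e4, e1e2 = e3, e2e1 = -e3, e2e2 = e4, e2e3 = e4, e3e2 = -e4) is a degeneration of the family S21^{2,1}: setting E1 = e1 - e2, E2 = e2, E3 = e3 + e5, E4 = e5, E5 = -t^{-1}e4 + t^{-1}e5 in the 5-dimensional algebra S21^{2,1}, the structure constants of S21^{2,1} in the basis E1,...,E5 converge as t → 0 to those of the 5-dimensional split extension of S01. -/
/-- The multiplication of the 5-dimensional complex algebra `S21^{2,1}`:
`e1e1 = 2e5`, `e1e2 = e3 + e4 + e5`, `e1e3 = e5`, `e2e1 = -e3`, `e2e2 = e5`,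
`e2e3 = e4`, `e3e1 = -e5`, `e3e2 = -e4`. -/
def s21mul (x y : Fin 5 → ℂ) : Fin 5 → ℂ :=
  ![0, 0,
    x 0 * y 1 - x 1 * y 0,
    x 0 * y 1 + x 1 * y 2 - x 2 * y 1,
    2 * (x 0 * y 0) + x 0 * y 1 + x 0 * y 2 + x 1 * y 1 - x 2 * y 0]

/-- The multiplication of the 5-dimensional split extension of `S01`
(`S01` on `e1,…,e4` with `e5` annihilating everything):
`e1e1 = e4`, `e1e2 = e3`, `e2e1 = -e3`, `e2e2 = e4`, `e2e3 = e4`, `e3e2 = -e4`. -/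
def s01extMul (x y : Fin 5 → ℂ) : Fin 5 → ℂ :=
  ![0, 0, x 0 * y 1 - x 1 * y 0,
    x 0 * y 0 + x 1 * y 1 + x 1 * y 2 - x 2 * y 1, 0]

/-- The parametrized basis `E1 = e1 - e2`, `E2 = e2`, `E3 = e3 + e5`, `E4 = e5`,
`E5 = -t⁻¹ e4 + t⁻¹ e5`. -/
noncomputable def E16 (t : ℂ) : Fin 5 → (Fin 5 → ℂ) :=
  ![![1, -1, 0, 0, 0], ![0, 1, 0, 0, 0], ![0, 0, 1, 0, 1],
    ![0, 0, 0, 0, 1], ![0, 0, 0, -t⁻¹, t⁻¹]]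

/-- Structure constants witnessing the degeneration. -/
noncomputable def c16 (t : ℂ) : Fin 5 → Fin 5 → Fin 5 → ℂ :=
  ![![![0,0,0,1,t], ![0,0,1,0,-t], ![0,0,0,0,t], 0, 0],
    ![![0,0,-1,0,0], ![0,0,0,1,0], ![0,0,0,1,-t], 0, 0],
    ![![0,0,0,0,-t], ![0,0,0,-1,t], 0, 0, 0],
    0, 0]

set_option maxHeartbeats 4000000 in
/-- `S01` (extended by a fifth annihilating basis vector) is a degeneration of
`S21^{2,1}`: in the parametrized basis `E16 t` the structure constants of
`S21^{2,1}` converge, as `t → 0`, to those of the split extension of `S01`. -/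
theorem stmt_16 :
    ∃ c : ℂ → Fin 5 → Fin 5 → Fin 5 → ℂ,
      (∀ t : ℂ, t ≠ 0 → LinearIndependent ℂ (E16 t)) ∧
      (∀ t : ℂ, t ≠ 0 → ∀ i j : Fin 5,
        s21mul (E16 t i) (E16 t j) = ∑ k, c t i j k • E16 t k) ∧
      (∀ i j k : Fin 5,
        Filter.Tendsto (fun t => c t i j k) (nhdsWithin 0 {(0 : ℂ)}ᶜ)
          (nhds (s01extMul (Pi.single i 1) (Pi.single j 1) k))) := by
  refine ⟨c16, ?_, ?_, ?_⟩
  · intro t ht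
    have : LinearIndependent ℂ (fun i => (Matrix.of (E16 t)) i) := by
      refine (Matrix.linearIndependent_rows_iff_isUnit (A := Matrix.of (E16 t))).mpr ?_
      apply IsUnit.of_mul_eq_one (M := Matrix (Fin 5) (Fin 5) ℂ) (b := Matrix.of
        ![![1,1,0,0,0], ![0,1,0,0,0], ![0,0,1,-1,0], ![0,0,0,1,-t], ![0,0,0,1,0]])
      ext i j
      fin_cases i <;> fin_cases j <;>
        · simp [E16, Matrix.mul_apply, Fin.sum_univ_five, Matrix.vecHead, Matrix.vecTail,
            Matrix.one_apply]
          try field_simp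
    exact this
  · intro t ht i j
    fin_cases i <;> fin_cases j <;>
      · funext k
        fin_cases k <;>
          · simp [E16, s21mul, c16, Fin.sum_univ_five, Matrix.vecHead, Matrix.vecTail]
            try field_simp
            try ring
  · intro i j k
    have hid : Filter.Tendsto (fun t : ℂ => t) (nhdsWithin 0 {(0 : ℂ)}ᶜ) (nhds 0) :=
      (continuous_id.tendsto' 0 0 rfl).mono_left nhdsWithin_le_nhds
    have hneg : Filter.Tendsto (fun t : ℂ => -t) (nhdsWithin 0 {(0 : ℂ)}ᶜ) (nhds 0) :=
      (continuous_neg.tendsto' 0 0 neg_zero).mono_left nhdsWithin_le_nhds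
    fin_cases i <;> fin_cases j <;> fin_cases k <;>
      · norm_num [c16, s01extMul, Pi.single_apply, Matrix.vecHead, Matrix.vecTail,
          Fin.ext_iff]
        try first
        | exact tendsto_const_nhds
        | exact hid
        | exact hneg
end
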